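/- arXiv:1703.00106 — 2 statements merged into one kernel-verified Lean document; each statement's English description precedes it below -/
import Mathlib

section
/- Let A ⊂ R^d be a convex body (compact, equal to the closure of its nonempty interior) and let ω*_N be an N-point configuration optimal for the s-polarization problem P_s(A;N) with minimizing point ỹ attained for a perturbed configuration. If x ∈ ω*_N, x_∂ ∈ ∂A achieves dist(x, ∂A), and the outward supporting hyperplane at x_∂ is {z : z(d) = x_∂(d)} with A contained in {z : z(d) ≤ x_∂(d)}, then for the configuration ω̃_N obtained by replacing x by x̃ = x - ε e_d ∈ A (ε > 0 small) and any point ỹ ∈ A attaining P_s(A; ω̃_N), one has ỹ(d) ≥ x(d) - ε/2. -/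
open scoped ENNReal

/-!
Since `ω` is optimal, the perturbed configuration `ω̃` has polarization at most that of `ω`;
evaluating both at the minimizer `ỹ` of `ω̃` gives `U_ω̃(ỹ) ≤ U_ω(ỹ)` for the potentials
`U_ω = ∑ⱼ |· - ωⱼ|^{-s}`. The potential `U_ω̃(ỹ)` is
finite because a nonempty open set is not covered by finitely many points, so the common terms
cancel and `|x - ỹ|^{-s} ≤ |x̃ - ỹ|^{-s}`, i.e. `|ỹ - x| ≤ |ỹ - x̃|`. Expanding
`|ỹ - x̃|² = |ỹ - x|² + 2ε (ỹ - x)·e_d + ε²` gives `(ỹ - x)·e_d ≥ -ε/2`.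
-/

open Finset Function

section Potential

variable {E ι : Type*} [Fintype ι]

-- At a point of the configuration the potential is `⊤` when `s > 0`, as `(ofReal 0)⁻¹ = ⊤`.
noncomputable def rieszPotential [PseudoMetricSpace E] (s : ℝ) (ω : ι → E) (y : E) : ℝ≥0∞ :=
  ∑ j, (ENNReal.ofReal (dist y (ω j)))⁻¹ ^ s

noncomputable def polarization [PseudoMetricSpace E] (s : ℝ) (A : Set E) (ω : ι → E) : ℝ≥0∞ :=
  ⨅ y ∈ A, rieszPotential s ω y

theorem rieszPotential_le_of_polarization_eq_iSup [PseudoMetricSpace E] {s : ℝ} {A : Set E}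
    {ω ω' : ι → E} {y : E}
    (hopt : polarization s A ω = ⨆ ω'' : {ω'' : ι → E // ∀ j, ω'' j ∈ A}, polarization s A ω''.1)
    (hω' : ∀ j, ω' j ∈ A) (hy : y ∈ A) (hatt : rieszPotential s ω' y = polarization s A ω') :
    rieszPotential s ω' y ≤ rieszPotential s ω y :=
  calc rieszPotential s ω' y = polarization s A ω' := hatt
    _ ≤ ⨆ ω'' : {ω'' : ι → E // ∀ j, ω'' j ∈ A}, polarization s A ω''.1 :=
        le_iSup (fun ω'' : {ω'' : ι → E // ∀ j, ω'' j ∈ A} ↦ polarization s A ω''.1) ⟨ω', hω'⟩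
    _ = polarization s A ω := hopt.symm
    _ ≤ rieszPotential s ω y := biInf_le _ hy

theorem rieszPotential_lt_top [MetricSpace E] {s : ℝ} (hs : 0 ≤ s) {ω : ι → E} {y : E}
    (hy : y ∉ Set.range ω) : rieszPotential s ω y < ⊤ := by
  refine ENNReal.sum_lt_top.2 fun j _ ↦ ENNReal.rpow_lt_top_of_nonneg hs ?_
  have : y ≠ ω j := fun h ↦ hy ⟨j, h.symm⟩
  simpa [ENNReal.inv_ne_top, dist_pos] using this

theorem polarization_lt_top [NormedAddCommGroup E] [NormedSpace ℝ E] [Nontrivial E] {s : ℝ}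
    (hs : 0 ≤ s) {A : Set E} (hA : (interior A).Nonempty) (ω : ι → E) :
    polarization s A ω < ⊤ := by
  obtain ⟨y, hyA, hyω⟩ := ((Set.finite_range ω).countable.dense_compl ℝ).inter_open_nonempty
    _ isOpen_interior hA
  exact (biInf_le _ (interior_subset hyA)).trans_lt (rieszPotential_lt_top hs hyω)

theorem rieszPotential_eq_add_sum_erase [PseudoMetricSpace E] [DecidableEq ι] (s : ℝ)
    (ω : ι → E) (y : E) (j : ι) :
    rieszPotential s ω y = (ENNReal.ofReal (dist y (ω j)))⁻¹ ^ s
      + ∑ k ∈ univ.erase j, (ENNReal.ofReal (dist y (ω k)))⁻¹ ^ s :=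
  (add_sum_erase _ _ (mem_univ j)).symm

theorem dist_le_of_rieszPotential_update_le [PseudoMetricSpace E] [DecidableEq ι] {s : ℝ}
    (hs : 0 < s) {ω : ι → E} {j : ι} {x' y : E}
    (hfin : rieszPotential s (update ω j x') y ≠ ⊤)
    (hle : rieszPotential s (update ω j x') y ≤ rieszPotential s ω y) :
    dist y (ω j) ≤ dist y x' := by
  have hrest : ∑ k ∈ univ.erase j, (ENNReal.ofReal (dist y (update ω j x' k)))⁻¹ ^ s
      = ∑ k ∈ univ.erase j, (ENNReal.ofReal (dist y (ω k)))⁻¹ ^ s :=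
    sum_congr rfl fun k hk ↦ by rw [update_of_ne (ne_of_mem_erase hk)]
  rw [rieszPotential_eq_add_sum_erase _ _ _ j, hrest, update_self] at hfin hle
  rw [rieszPotential_eq_add_sum_erase _ _ _ j] at hle
  have hterm := (ENNReal.add_le_add_iff_right (ENNReal.add_ne_top.1 hfin).2).1 hle
  rwa [ENNReal.rpow_le_rpow_iff hs, ENNReal.inv_le_inv,
    ENNReal.ofReal_le_ofReal_iff dist_nonneg] at hterm

end Potential

theorem sub_half_le_inner_of_dist_le_dist_sub_smul {F : Type*} [NormedAddCommGroup F]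
    [InnerProductSpace ℝ F] {x y v : F} (hv : ‖v‖ = 1) {ε : ℝ} (hε : 0 < ε)
    (h : dist y x ≤ dist y (x - ε • v)) :
    inner ℝ x v - ε / 2 ≤ inner ℝ y v := by
  have hsq : ‖y - (x - ε • v)‖ ^ 2 = ‖y - x‖ ^ 2 + 2 * ε * (inner ℝ y v - inner ℝ x v) + ε ^ 2 := by
    rw [sub_sub_eq_add_sub, add_sub_right_comm, norm_add_sq_real, real_inner_smul_right,
      inner_sub_left, norm_smul, hv, Real.norm_of_nonneg hε.le]
    ring
  rw [dist_eq_norm, dist_eq_norm] at h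
  nlinarith [pow_le_pow_left₀ (norm_nonneg _) h 2]

theorem stmt_3_general {d : ℕ} (A : Set (EuclideanSpace ℝ (Fin d)))
    (hne : (interior A).Nonempty)
    (s : ℝ) (hs : 0 < s) (N : ℕ)
    (ω : Fin N → EuclideanSpace ℝ (Fin d)) (hω : ∀ j, ω j ∈ A)
    (hopt : (⨅ y ∈ A, ∑ j, (ENNReal.ofReal (dist y (ω j)))⁻¹ ^ s)
      = ⨆ ω' : {ω' : Fin N → EuclideanSpace ℝ (Fin d) // ∀ j, ω' j ∈ A},
          ⨅ y ∈ A, ∑ j, (ENNReal.ofReal (dist y (ω'.1 j)))⁻¹ ^ s)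
    (j₀ : Fin N) (x : EuclideanSpace ℝ (Fin d)) (hx : x = ω j₀)
    (i : Fin d)
    (ε : ℝ) (hε : 0 < ε)
    (xt : EuclideanSpace ℝ (Fin d)) (hxt : xt = x - ε • EuclideanSpace.single i 1)
    (hxtA : xt ∈ A)
    (ωt : Fin N → EuclideanSpace ℝ (Fin d)) (hωt : ωt = Function.update ω j₀ xt)
    (yt : EuclideanSpace ℝ (Fin d)) (hyt : yt ∈ A)
    (hatt : ∑ j, (ENNReal.ofReal (dist yt (ωt j)))⁻¹ ^ s
      = ⨅ y ∈ A, ∑ j, (ENNReal.ofReal (dist y (ωt j)))⁻¹ ^ s) :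
    x i - ε / 2 ≤ yt i := by
  have : Nonempty (Fin d) := ⟨i⟩
  subst hωt
  have hωtA : ∀ j, update ω j₀ xt j ∈ A := (forall_update_iff ω fun _ z ↦ z ∈ A).2
    ⟨hxtA, fun j _ ↦ hω j⟩
  have hle := rieszPotential_le_of_polarization_eq_iSup hopt hωtA hyt hatt
  have hfin : rieszPotential s (update ω j₀ xt) yt ≠ ⊤ :=
    (hatt.trans_lt (polarization_lt_top hs.le hne _)).ne
  have hdist := dist_le_of_rieszPotential_update_le hs hfin hle
  rw [← hx, hxt] at hdist
  simpa [EuclideanSpace.inner_single_right] using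
    sub_half_le_inner_of_dist_le_dist_sub_smul (by simp) hε hdist

/-- Let `A ⊆ ℝ^d` be a convex body, `ω` an `N`-point configuration optimal
for `P_s(A;N)`, `x = ω j₀ ∈ ω`, `x∂ ∈ ∂A` achieving `dist(x, ∂A)`, with supporting
hyperplane `{z : z(d) = x∂(d)}` and `A ⊆ {z : z(d) ≤ x∂(d)}`.  If `x̃ = x - ε e_d ∈ A`
(with `ε > 0`), `ω̃` is `ω` with `x` replaced by `x̃`, and `ỹ ∈ A` attains
`P_s(A; ω̃)`, then `ỹ(d) ≥ x(d) - ε/2`. -/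
theorem stmt_3 {d : ℕ} (hd : 0 < d) (A : Set (EuclideanSpace ℝ (Fin d)))
    (hA : IsCompact A) (hconv : Convex ℝ A) (hbody : A = closure (interior A))
    (hne : (interior A).Nonempty)
    (s : ℝ) (hs : 0 < s) (N : ℕ) (hN : 0 < N)
    (ω : Fin N → EuclideanSpace ℝ (Fin d)) (hω : ∀ j, ω j ∈ A)
    (hopt : (⨅ y ∈ A, ∑ j, (ENNReal.ofReal (dist y (ω j)))⁻¹ ^ s)
      = ⨆ ω' : {ω' : Fin N → EuclideanSpace ℝ (Fin d) // ∀ j, ω' j ∈ A},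
          ⨅ y ∈ A, ∑ j, (ENNReal.ofReal (dist y (ω'.1 j)))⁻¹ ^ s)
    (j₀ : Fin N) (x : EuclideanSpace ℝ (Fin d)) (hx : x = ω j₀)
    (xB : EuclideanSpace ℝ (Fin d)) (hxB : xB ∈ frontier A)
    (hdistB : dist x xB = Metric.infDist x (frontier A))
    (i : Fin d) (hi : (i : ℕ) = d - 1)
    (hplane : ∀ z ∈ A, z i ≤ xB i)
    (ε : ℝ) (hε : 0 < ε)
    (xt : EuclideanSpace ℝ (Fin d)) (hxt : xt = x - ε • EuclideanSpace.single i 1)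
    (hxtA : xt ∈ A)
    (ωt : Fin N → EuclideanSpace ℝ (Fin d)) (hωt : ωt = Function.update ω j₀ xt)
    (yt : EuclideanSpace ℝ (Fin d)) (hyt : yt ∈ A)
    (hatt : ∑ j, (ENNReal.ofReal (dist yt (ωt j)))⁻¹ ^ s
      = ⨅ y ∈ A, ∑ j, (ENNReal.ofReal (dist y (ωt j)))⁻¹ ^ s) :
    x i - ε / 2 ≤ yt i :=
  stmt_3_general A hne s hs N ω hω hopt j₀ x hx i ε hε xt hxt hxtA ωt hωt yt hyt hatt
end

section
/- Let A ⊂ R^ℓ be compact and suppose there exist constants a, b > 0 with a N^{-1/d} ≤ ρ_A(N) ≤ b N^{-1/d} for all N, and suppose P_s(A;N) ≥ ρ_A(N)^{-s} and P_s(A;N) ≤ K_s ρ_A(N)^{-s} for all N and all sufficiently large s, where K_s^{1/s} → 1 as s → ∞. If furthermore lim_{N→∞} P_s(A;N)/N^{s/d} =: σ_s exists for each s > d, then lim_{s→∞} σ_s^{1/s} and lim_{N→∞} N^{1/d} ρ_A(N) both exist and lim_{s→∞} σ_s^{1/s} = 1 / lim_{N→∞} N^{1/d} ρ_A(N). -/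
open scoped ENNReal BigOperators
open Filter

/-- abstract Theorem 2.6: Let `A ⊆ ℝ^ℓ` be compact, `P s N` the `N`-th
`s`-polarization constant of `A` and `ρ N` the best `N`-point covering radius.  Suppose
`a N^{-1/d} ≤ ρ N ≤ b N^{-1/d}`, that for all sufficiently large `s`,
`ρ(N)^{-s} ≤ P s N ≤ K_s ρ(N)^{-s}` with `K_s^{1/s} → 1`, and that for each `s > d` the
limit `σ_s = lim_N P s N / N^{s/d}` exists.  Then `lim_N N^{1/d} ρ N` and
`lim_s σ_s^{1/s}` exist and `lim_s σ_s^{1/s} = 1 / lim_N N^{1/d} ρ N`. -/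
theorem stmt_17 {ℓ d : ℕ} (hd : 0 < d) (A : Set (EuclideanSpace ℝ (Fin ℓ)))
    (hA : IsCompact A) (hne : A.Nonempty)
    (P : ℝ → ℕ → ℝ≥0∞)
    (hPdef : ∀ s N, P s N =
      ⨆ ω : {ω : Fin N → EuclideanSpace ℝ (Fin ℓ) // ∀ j, ω j ∈ A},
        ⨅ y ∈ A, ∑ j, (ENNReal.ofReal (dist y (ω.1 j)))⁻¹ ^ s)
    (ρ : ℕ → ℝ)
    (hρdef : ∀ N, ρ N = sInf {r : ℝ | 0 ≤ r ∧
      ∃ ω : Fin N → EuclideanSpace ℝ (Fin ℓ),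
        (∀ j, ω j ∈ A) ∧ ∀ y ∈ A, ∃ j, dist y (ω j) ≤ r})
    (a b : ℝ) (ha : 0 < a) (hb : 0 < b)
    (hab : ∀ N : ℕ, 0 < N →
      a * (N : ℝ) ^ (-(1 : ℝ) / d) ≤ ρ N ∧ ρ N ≤ b * (N : ℝ) ^ (-(1 : ℝ) / d))
    (K : ℝ → ℝ) (s₀ : ℝ) (hs₀ : (d : ℝ) < s₀)
    (hKpos : ∀ s, s₀ ≤ s → 0 < K s)
    (hsand : ∀ s, s₀ ≤ s → ∀ N : ℕ, 0 < N →
      ENNReal.ofReal ((ρ N) ^ (-s)) ≤ P s N ∧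
      P s N ≤ ENNReal.ofReal (K s * (ρ N) ^ (-s)))
    (hK1 : Tendsto (fun s : ℝ => K s ^ (1 / s)) atTop (nhds 1))
    (σ : ℝ → ℝ≥0∞)
    (hσ : ∀ s : ℝ, (d : ℝ) < s →
      Tendsto (fun N : ℕ => P s N / ENNReal.ofReal ((N : ℝ) ^ (s / d)))
        atTop (nhds (σ s))) :
    ∃ Lρ : ℝ, 0 < Lρ ∧
      Tendsto (fun N : ℕ => (N : ℝ) ^ ((1 : ℝ) / d) * ρ N) atTop (nhds Lρ) ∧
      Tendsto (fun s : ℝ => σ s ^ (1 / s)) atTop (nhds (ENNReal.ofReal Lρ)⁻¹) := by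
  classical
  clear hPdef hρdef hA hne hs₀
  set f : ℕ → ℝ := fun N => (N : ℝ) ^ ((1 : ℝ) / d) * ρ N with hf_def
  -- positivity of ρ
  have hρpos : ∀ N : ℕ, 0 < N → 0 < ρ N := by
    intro N hN
    have hN0 : (0 : ℝ) < N := by exact_mod_cast hN
    have := (hab N hN).1
    have hpow : (0 : ℝ) < (N : ℝ) ^ (-(1 : ℝ) / d) := Real.rpow_pos_of_pos hN0 _
    nlinarith
  -- the basic bounds a ≤ f N ≤ b
  have hfab : ∀ N : ℕ, 0 < N → a ≤ f N ∧ f N ≤ b := by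
    intro N hN
    have hN0 : (0 : ℝ) < N := by exact_mod_cast hN
    have hcancel : (N : ℝ) ^ ((1 : ℝ) / d) * (N : ℝ) ^ (-(1 : ℝ) / d) = 1 := by
      rw [← Real.rpow_add hN0, show (1 : ℝ) / (d : ℝ) + -(1 : ℝ) / (d : ℝ) = 0 by ring,
        Real.rpow_zero]
    have hpn : (0 : ℝ) ≤ (N : ℝ) ^ ((1 : ℝ) / d) := (Real.rpow_pos_of_pos hN0 _).le
    obtain ⟨h1, h2⟩ := hab N hN
    constructor
    · have := mul_le_mul_of_nonneg_left h1 hpn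
      calc a = (N : ℝ) ^ ((1 : ℝ) / d) * (a * (N : ℝ) ^ (-(1 : ℝ) / d)) := by
              rw [mul_comm a, ← mul_assoc, hcancel, one_mul]
        _ ≤ f N := this
    · have := mul_le_mul_of_nonneg_left h2 hpn
      calc f N ≤ (N : ℝ) ^ ((1 : ℝ) / d) * (b * (N : ℝ) ^ (-(1 : ℝ) / d)) := this
        _ = b := by rw [mul_comm b, ← mul_assoc, hcancel, one_mul]
  have hev_a : ∀ᶠ N : ℕ in atTop, a ≤ f N := by
    filter_upwards [eventually_gt_atTop 0] with N hN using (hfab N hN).1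
  have hev_b : ∀ᶠ N : ℕ in atTop, f N ≤ b := by
    filter_upwards [eventually_gt_atTop 0] with N hN using (hfab N hN).2
  have hbdd_le : IsBoundedUnder (· ≤ ·) atTop f := isBoundedUnder_of_eventually_le hev_b
  have hbdd_ge : IsBoundedUnder (· ≥ ·) atTop f := isBoundedUnder_of_eventually_ge hev_a
  set Lm := liminf f atTop with hLm_def
  set Lp := limsup f atTop with hLp_def
  have haLm : a ≤ Lm := le_liminf_of_le hbdd_le.isCoboundedUnder_ge hev_a
  have hLpb : Lp ≤ b := limsup_le_of_le hbdd_ge.isCoboundedUnder_le hev_b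
  have hLmLp : Lm ≤ Lp := liminf_le_limsup hbdd_le hbdd_ge
  have hLm_pos : 0 < Lm := lt_of_lt_of_le ha haLm
  have hLp_pos : 0 < Lp := lt_of_lt_of_le hLm_pos hLmLp
  set s₁ : ℝ := max s₀ ((d : ℝ) + 1) with hs₁_def
  -- the main per-s claims
  have key : ∀ s : ℝ, s₁ ≤ s →
      Lm ^ (-s) ≤ (σ s).toReal ∧ (σ s).toReal ≤ K s * Lp ^ (-s) ∧ σ s ≠ ⊤ := by
    intro s hs
    have hss₀ : s₀ ≤ s := le_trans (le_max_left _ _) hs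
    have hsd : (d : ℝ) < s := by
      have := le_trans (le_max_right s₀ ((d : ℝ) + 1)) hs
      linarith
    have hspos : 0 < s := lt_of_le_of_lt (Nat.cast_nonneg d) hsd
    have hKs : 0 < K s := hKpos s hss₀
    -- identity: ρ N ^ (-s) / N ^ (s/d) = f N ^ (-s)
    have hiden : ∀ N : ℕ, 0 < N → (ρ N) ^ (-s) / (N : ℝ) ^ (s / (d : ℝ)) = f N ^ (-s) := by
      intro N hN
      have hN0 : (0 : ℝ) < N := by exact_mod_cast hN
      have hρ0 : (0 : ℝ) ≤ ρ N := (hρpos N hN).le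
      have h1 : f N ^ (-s) = ((N : ℝ) ^ ((1 : ℝ) / d)) ^ (-s) * (ρ N) ^ (-s) :=
        Real.mul_rpow (Real.rpow_pos_of_pos hN0 _).le hρ0
      have h2 : ((N : ℝ) ^ ((1 : ℝ) / d)) ^ (-s) = ((N : ℝ) ^ (s / (d : ℝ)))⁻¹ := by
        rw [← Real.rpow_mul hN0.le, ← Real.rpow_neg hN0.le]
        congr 1
        ring
      rw [h1, h2, div_eq_mul_inv, mul_comm]
    have hNev : ∀ᶠ N : ℕ in atTop, 0 < N := eventually_gt_atTop 0
    -- eventual ENNReal sandwich for the quotient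
    have hup : ∀ᶠ N : ℕ in atTop,
        P s N / ENNReal.ofReal ((N : ℝ) ^ (s / (d : ℝ))) ≤
          ENNReal.ofReal (K s * f N ^ (-s)) := by
      filter_upwards [hNev] with N hN
      have hN0 : (0 : ℝ) < N := by exact_mod_cast hN
      have hpow : (0 : ℝ) < (N : ℝ) ^ (s / (d : ℝ)) := Real.rpow_pos_of_pos hN0 _
      calc P s N / ENNReal.ofReal ((N : ℝ) ^ (s / (d : ℝ)))
          ≤ ENNReal.ofReal (K s * (ρ N) ^ (-s)) / ENNReal.ofReal ((N : ℝ) ^ (s / (d : ℝ))) :=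
            ENNReal.div_le_div_right (hsand s hss₀ N hN).2 _
        _ = ENNReal.ofReal (K s * (ρ N) ^ (-s) / (N : ℝ) ^ (s / (d : ℝ))) :=
            (ENNReal.ofReal_div_of_pos hpow).symm
        _ = ENNReal.ofReal (K s * f N ^ (-s)) := by rw [mul_div_assoc, hiden N hN]
    have hlo : ∀ᶠ N : ℕ in atTop,
        ENNReal.ofReal (f N ^ (-s)) ≤
          P s N / ENNReal.ofReal ((N : ℝ) ^ (s / (d : ℝ))) := by
      filter_upwards [hNev] with N hN
      have hN0 : (0 : ℝ) < N := by exact_mod_cast hN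
      have hpow : (0 : ℝ) < (N : ℝ) ^ (s / (d : ℝ)) := Real.rpow_pos_of_pos hN0 _
      calc ENNReal.ofReal (f N ^ (-s))
          = ENNReal.ofReal ((ρ N) ^ (-s) / (N : ℝ) ^ (s / (d : ℝ))) := by rw [hiden N hN]
        _ = ENNReal.ofReal ((ρ N) ^ (-s)) / ENNReal.ofReal ((N : ℝ) ^ (s / (d : ℝ))) :=
            ENNReal.ofReal_div_of_pos hpow
        _ ≤ P s N / ENNReal.ofReal ((N : ℝ) ^ (s / (d : ℝ))) :=
            ENNReal.div_le_div_right (hsand s hss₀ N hN).1 _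
    -- σ s is finite
    have hfa_bound : ∀ᶠ N : ℕ in atTop, K s * f N ^ (-s) ≤ K s * a ^ (-s) := by
      filter_upwards [hev_a] with N hN
      exact mul_le_mul_of_nonneg_left
        (Real.rpow_le_rpow_of_nonpos ha hN (neg_nonpos.mpr hspos.le)) hKs.le
    have hσ_le : σ s ≤ ENNReal.ofReal (K s * a ^ (-s)) := by
      refine le_of_tendsto (hσ s hsd) ?_
      filter_upwards [hup, hfa_bound] with N h1 h2
      exact le_trans h1 (ENNReal.ofReal_le_ofReal h2)
    have hσtop : σ s ≠ ⊤ := ne_top_of_le_ne_top ENNReal.ofReal_ne_top hσ_le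
    -- real-valued sandwich
    set T : ℕ → ℝ := fun N => (P s N / ENNReal.ofReal ((N : ℝ) ^ (s / (d : ℝ)))).toReal
      with hT_def
    have hT_tendsto : Tendsto T atTop (nhds (σ s).toReal) :=
      (ENNReal.tendsto_toReal hσtop).comp (hσ s hsd)
    have hT_up : ∀ᶠ N : ℕ in atTop, T N ≤ K s * f N ^ (-s) := by
      filter_upwards [hup, hev_a] with N h1 hNa
      have hfN : 0 < f N := lt_of_lt_of_le ha hNa
      exact ENNReal.toReal_le_of_le_ofReal
        (mul_nonneg hKs.le (Real.rpow_pos_of_pos hfN _).le) h1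
    have hT_lo : ∀ᶠ N : ℕ in atTop, f N ^ (-s) ≤ T N := by
      filter_upwards [hlo, hup, hev_a] with N h1 h2 hNa
      have hQtop : P s N / ENNReal.ofReal ((N : ℝ) ^ (s / (d : ℝ))) ≠ ⊤ :=
        ne_top_of_le_ne_top ENNReal.ofReal_ne_top h2
      exact (ENNReal.ofReal_le_iff_le_toReal hQtop).1 h1
    -- boundedness of the auxiliary sequences
    have hfs_le : ∀ᶠ N : ℕ in atTop, f N ^ (-s) ≤ a ^ (-s) := by
      filter_upwards [hev_a] with N hN
      exact Real.rpow_le_rpow_of_nonpos ha hN (neg_nonpos.mpr hspos.le)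
    have hfs_ge : ∀ᶠ N : ℕ in atTop, b ^ (-s) ≤ f N ^ (-s) := by
      filter_upwards [hev_a, hev_b] with N hNa hNb
      exact Real.rpow_le_rpow_of_nonpos (lt_of_lt_of_le ha hNa) hNb
        (neg_nonpos.mpr hspos.le)
    have hT_bdd_le : IsBoundedUnder (· ≤ ·) atTop T :=
      isBoundedUnder_of_eventually_le (a := K s * a ^ (-s))
        (by filter_upwards [hT_up, hfa_bound] with N h1 h2 using le_trans h1 h2)
    have hT_bdd_ge : IsBoundedUnder (· ≥ ·) atTop T :=
      isBoundedUnder_of_eventually_ge (a := b ^ (-s))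
        (by filter_upwards [hT_lo, hfs_ge] with N h1 h2 using le_trans h2 h1)
    -- the antitone map x ↦ (x ⊔ a) ^ (-s)
    have hg_anti : Antitone (fun x : ℝ => (x ⊔ a) ^ (-s)) := by
      intro x y hxy
      exact Real.rpow_le_rpow_of_nonpos (lt_of_lt_of_le ha le_sup_right)
        (sup_le_sup_right hxy a) (neg_nonpos.mpr hspos.le)
    have hg_cont : ∀ x : ℝ, 0 < x → ContinuousAt (fun x : ℝ => (x ⊔ a) ^ (-s)) x := by
      intro x hx
      have h1 : ContinuousAt (fun y : ℝ => y ⊔ a) x := (continuous_id.max continuous_const).continuousAt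
      exact h1.rpow_const (Or.inl (ne_of_gt (lt_of_lt_of_le ha le_sup_right)))
    have hgf : (fun N => (f N ⊔ a) ^ (-s)) =ᶠ[atTop] fun N => f N ^ (-s) := by
      filter_upwards [hev_a] with N hN
      rw [sup_eq_left.mpr hN]
    -- claim 1: Lm ^ (-s) ≤ (σ s).toReal
    have claim1 : Lm ^ (-s) ≤ (σ s).toReal := by
      have hmap : (Lm ⊔ a) ^ (-s) = limsup ((fun x : ℝ => (x ⊔ a) ^ (-s)) ∘ f) atTop :=
        hg_anti.map_liminf_of_continuousAt f (hg_cont _ hLm_pos)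
          hbdd_le.isCoboundedUnder_ge hbdd_ge
      have hmap' : (Lm ⊔ a) ^ (-s) = limsup (fun N => (f N ⊔ a) ^ (-s)) atTop := by
        simpa [Function.comp_def] using hmap
      have heq : Lm ^ (-s) = limsup (fun N => f N ^ (-s)) atTop := by
        rw [← limsup_congr hgf, ← hmap', sup_eq_left.mpr haLm]
      rw [heq, ← hT_tendsto.limsup_eq]
      refine limsup_le_limsup hT_lo ?_ hT_bdd_le
      exact (isBoundedUnder_of_eventually_ge hfs_ge).isCoboundedUnder_le
    -- claim 2: (σ s).toReal ≤ K s * Lp ^ (-s)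
    have claim2 : (σ s).toReal ≤ K s * Lp ^ (-s) := by
      have hg2_anti : Antitone (fun x : ℝ => K s * (x ⊔ a) ^ (-s)) := fun x y hxy =>
        mul_le_mul_of_nonneg_left (hg_anti hxy) hKs.le
      have hg2_cont : ContinuousAt (fun x : ℝ => K s * (x ⊔ a) ^ (-s)) Lp :=
        (continuousAt_const.mul (hg_cont _ hLp_pos))
      have hmap : K s * (Lp ⊔ a) ^ (-s) =
          liminf ((fun x : ℝ => K s * (x ⊔ a) ^ (-s)) ∘ f) atTop :=
        hg2_anti.map_limsup_of_continuousAt f hg2_cont hbdd_le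
          hbdd_ge.isCoboundedUnder_le
      have hgf2 : ((fun x : ℝ => K s * (x ⊔ a) ^ (-s)) ∘ f) =ᶠ[atTop]
          fun N => K s * f N ^ (-s) := by
        filter_upwards [hev_a] with N hN
        simp only [Function.comp_apply, sup_eq_left.mpr hN]
      have hmap' : K s * (Lp ⊔ a) ^ (-s) =
          liminf (fun N => K s * (f N ⊔ a) ^ (-s)) atTop := by
        simpa [Function.comp_def] using hmap
      have hgf2' : (fun N => K s * (f N ⊔ a) ^ (-s)) =ᶠ[atTop]
          fun N => K s * f N ^ (-s) := by
        filter_upwards [hev_a] with N hN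
        rw [sup_eq_left.mpr hN]
      have heq : K s * Lp ^ (-s) = liminf (fun N => K s * f N ^ (-s)) atTop := by
        rw [← liminf_congr hgf2', ← hmap', sup_eq_left.mpr (le_trans haLm hLmLp)]
      rw [heq, ← hT_tendsto.liminf_eq]
      refine liminf_le_liminf hT_up hT_bdd_ge ?_
      refine (isBoundedUnder_of_eventually_le (a := K s * a ^ (-s)) ?_).isCoboundedUnder_ge
      exact hfa_bound
    exact ⟨claim1, claim2, hσtop⟩
  -- comparison of limsup and liminf
  have hcomp : ∀ s : ℝ, s₁ ≤ s → Lp ≤ K s ^ (1 / s) * Lm := by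
    intro s hs
    have hsd : (d : ℝ) < s := by
      have := le_trans (le_max_right s₀ ((d : ℝ) + 1)) hs
      linarith
    have hspos : 0 < s := lt_of_le_of_lt (Nat.cast_nonneg d) hsd
    have hKs : 0 < K s := hKpos s (le_trans (le_max_left _ _) hs)
    obtain ⟨c1, c2, -⟩ := key s hs
    have h0 : Lm ^ (-s) ≤ K s * Lp ^ (-s) := le_trans c1 c2
    have hLps : (0 : ℝ) < Lp ^ s := Real.rpow_pos_of_pos hLp_pos _
    have h1 : Lp ^ s * Lm ^ (-s) ≤ K s := by
      have := mul_le_mul_of_nonneg_left h0 hLps.le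
      calc Lp ^ s * Lm ^ (-s) ≤ Lp ^ s * (K s * Lp ^ (-s)) := this
        _ = K s * (Lp ^ s * Lp ^ (-s)) := by ring
        _ = K s := by rw [← Real.rpow_add hLp_pos]; simp
    have h2 : (Lp ^ s * Lm ^ (-s)) ^ (1 / s) ≤ K s ^ (1 / s) :=
      Real.rpow_le_rpow (mul_nonneg hLps.le (Real.rpow_pos_of_pos hLm_pos _).le) h1
        (by positivity)
    have h3 : (Lp ^ s * Lm ^ (-s)) ^ (1 / s) = Lp * Lm⁻¹ := by
      rw [Real.mul_rpow hLps.le (Real.rpow_pos_of_pos hLm_pos _).le,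
        ← Real.rpow_mul hLp_pos.le, ← Real.rpow_mul hLm_pos.le,
        mul_one_div_cancel hspos.ne', Real.rpow_one, neg_mul,
        mul_one_div_cancel hspos.ne', Real.rpow_neg_one]
    rw [h3] at h2
    calc Lp = Lp * Lm⁻¹ * Lm := by field_simp
      _ ≤ K s ^ (1 / s) * Lm := mul_le_mul_of_nonneg_right h2 hLm_pos.le
  have hLpLm : Lp ≤ Lm := by
    have htend : Tendsto (fun s : ℝ => K s ^ (1 / s) * Lm) atTop (nhds (1 * Lm)) :=
      hK1.mul_const Lm
    rw [one_mul] at htend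
    have hev : ∀ᶠ s : ℝ in atTop, Lp ≤ K s ^ (1 / s) * Lm := by
      filter_upwards [eventually_ge_atTop s₁] with s hs using hcomp s hs
    exact ge_of_tendsto htend hev
  have hEq : Lp = Lm := le_antisymm hLpLm hLmLp
  refine ⟨Lm, hLm_pos, ?_, ?_⟩
  · exact tendsto_of_liminf_eq_limsup rfl hEq hbdd_le hbdd_ge
  · -- the squeeze for σ s ^ (1/s)
    have hσ_bounds : ∀ᶠ s : ℝ in atTop,
        ENNReal.ofReal Lm⁻¹ ≤ σ s ^ (1 / s) ∧
          σ s ^ (1 / s) ≤ ENNReal.ofReal (K s ^ (1 / s) * Lm⁻¹) := by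
      filter_upwards [eventually_ge_atTop s₁] with s hs
      have hsd : (d : ℝ) < s := by
        have := le_trans (le_max_right s₀ ((d : ℝ) + 1)) hs
        linarith
      have hspos : 0 < s := lt_of_le_of_lt (Nat.cast_nonneg d) hsd
      have hKs : 0 < K s := hKpos s (le_trans (le_max_left _ _) hs)
      obtain ⟨c1, c2, hσtop⟩ := key s hs
      rw [hEq] at c2
      have hLms : (0 : ℝ) < Lm ^ (-s) := Real.rpow_pos_of_pos hLm_pos _
      have hlow : ENNReal.ofReal (Lm ^ (-s)) ≤ σ s :=
        (ENNReal.ofReal_le_iff_le_toReal hσtop).2 c1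
      have hhigh : σ s ≤ ENNReal.ofReal (K s * Lm ^ (-s)) := by
        conv_lhs => rw [← ENNReal.ofReal_toReal hσtop]
        exact ENNReal.ofReal_le_ofReal c2
      have hinv : (Lm ^ (-s)) ^ (1 / s) = Lm⁻¹ := by
        rw [← Real.rpow_mul hLm_pos.le, neg_mul, mul_one_div_cancel hspos.ne',
          Real.rpow_neg_one]
      constructor
      · calc ENNReal.ofReal Lm⁻¹ = ENNReal.ofReal ((Lm ^ (-s)) ^ (1 / s)) := by rw [hinv]
          _ = (ENNReal.ofReal (Lm ^ (-s))) ^ (1 / s) :=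
              (ENNReal.ofReal_rpow_of_pos hLms).symm
          _ ≤ σ s ^ (1 / s) := ENNReal.rpow_le_rpow hlow (by positivity)
      · calc σ s ^ (1 / s) ≤ (ENNReal.ofReal (K s * Lm ^ (-s))) ^ (1 / s) :=
              ENNReal.rpow_le_rpow hhigh (by positivity)
          _ = ENNReal.ofReal ((K s * Lm ^ (-s)) ^ (1 / s)) :=
              ENNReal.ofReal_rpow_of_pos (by positivity)
          _ = ENNReal.ofReal (K s ^ (1 / s) * Lm⁻¹) := by
              rw [Real.mul_rpow hKs.le hLms.le, hinv]
    have hupper : Tendsto (fun s : ℝ => ENNReal.ofReal (K s ^ (1 / s) * Lm⁻¹)) atTop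
        (nhds (ENNReal.ofReal Lm)⁻¹) := by
      have h1 : Tendsto (fun s : ℝ => K s ^ (1 / s) * Lm⁻¹) atTop (nhds (1 * Lm⁻¹)) :=
        hK1.mul_const Lm⁻¹
      rw [one_mul] at h1
      have h2 := (ENNReal.continuous_ofReal.tendsto Lm⁻¹).comp h1
      rwa [ENNReal.ofReal_inv_of_pos hLm_pos] at h2
    have hlower : Tendsto (fun _ : ℝ => ENNReal.ofReal Lm⁻¹) atTop
        (nhds (ENNReal.ofReal Lm)⁻¹) := by
      rw [← ENNReal.ofReal_inv_of_pos hLm_pos]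
      exact tendsto_const_nhds
    exact tendsto_of_tendsto_of_tendsto_of_le_of_le' hlower hupper
      (hσ_bounds.mono fun s h => h.1) (hσ_bounds.mono fun s h => h.2)
end
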